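/- Let f ∈ C^∞(ℝ^d) and suppose there exists C ≥ 1 such that |x^β ∂^α f(x)| ≤ C^{|α|+|β|+1} M(α,β) for all α, β ∈ ℕ^d and x ∈ ℝ^d, where M(α,β) = (|α|!)^{1/2}·(max(|α|,|β|)!)^{1/2}. Then there exist constants C' > 0 and c > 0 such that for all multi-indices α, β with |β| ≤ |α| and all x ∈ ℝ^d, |x^β ∂^α f(x)| ≤ C'^{|α|+1} |α|! e^{−c|x|²}. -/

import Mathlib

open scoped BigOperators
open MeasureTheory

noncomputable section

/-- ℝ^d with the Euclidean norm. -/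
abbrev Rd (d : ℕ) := EuclideanSpace ℝ (Fin d)
/-- ℂ^d with the Euclidean norm. -/
abbrev Cd (d : ℕ) := EuclideanSpace ℂ (Fin d)

/-- Partial derivative in direction `j`. -/
noncomputable def pd {d : ℕ} {F : Type*} [NormedAddCommGroup F] [NormedSpace ℝ F]
    (j : Fin d) (f : Rd d → F) : Rd d → F :=
  fun x => fderiv ℝ f x (EuclideanSpace.single j 1)

/-- Iterated multi-index partial derivative `∂^α`. -/
noncomputable def mderiv {d : ℕ} {F : Type*} [NormedAddCommGroup F] [NormedSpace ℝ F]
    (α : Fin d → ℕ) (f : Rd d → F) : Rd d → F :=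
  (List.finRange d).foldr (fun j g => (pd j)^[α j] g) f

/-- `|α| = α_1 + ⋯ + α_d`. -/
def msize {d : ℕ} (α : Fin d → ℕ) : ℕ := ∑ j, α j

/-- `α! = α_1! ⋯ α_d!`. -/
def mfact {d : ℕ} (α : Fin d → ℕ) : ℕ := ∏ j, Nat.factorial (α j)

/-- `x^β = x_1^{β_1} ⋯ x_d^{β_d}`. -/
noncomputable def mpow {d : ℕ} (x : Rd d) (β : Fin d → ℕ) : ℝ := ∏ j, (x j) ^ (β j)

/-- `M(α,β) = (|α|!)^{1/2} · (max(|α|,|β|)!)^{1/2}`. -/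
noncomputable def Mab {d : ℕ} (α β : Fin d → ℕ) : ℝ :=
  Real.sqrt (Nat.factorial (msize α)) * Real.sqrt (Nat.factorial (max (msize α) (msize β)))

/-- The Japanese bracket `⟨x⟩ = (1 + |x|²)^{1/2}`. -/
noncomputable def jap {d : ℕ} (x : Rd d) : ℝ := Real.sqrt (1 + ‖x‖^2)

/-- The function `x ↦ x^β ∂^α f(x)`. -/
noncomputable def wD {d : ℕ} (α β : Fin d → ℕ) (f : Rd d → ℂ) : Rd d → ℂ :=
  fun x => (mpow x β : ℂ) * mderiv α f x

/-- The `L²(ℝ^d)` norm. -/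
noncomputable def L2norm {d : ℕ} (f : Rd d → ℂ) : ℝ := (eLpNorm f 2 volume).toReal

/-- All pairs of multi-indices `(α, β)` with `|α| + |β| ≤ N`. -/
def mIdx (d N : ℕ) : Finset ((Fin d → ℕ) × (Fin d → ℕ)) :=
  ((Finset.Iic (fun _ => N : Fin d → ℕ)) ×ˢ (Finset.Iic (fun _ => N : Fin d → ℕ))).filter
    (fun p => msize p.1 + msize p.2 ≤ N)

/-- The `Q^s` norm: `‖f‖_{Q^s} = Σ_{|γ|+|δ| ≤ s} ‖x^δ ∂^γ f‖_{L²}`. -/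
noncomputable def Qnorm (d s : ℕ) (f : Rd d → ℂ) : ℝ :=
  ∑ p ∈ mIdx d s, L2norm (wD p.1 p.2 f)

/-- The partial sum `S_N^{s,ε}[u] = Σ_{|α|+|β| ≤ N} ε^{|α|+|β|} M(α,β)⁻¹ ‖x^β ∂^α u‖_{Q^s}`. -/
noncomputable def SN (d s : ℕ) (ε : ℝ) (N : ℕ) (u : Rd d → ℂ) : ℝ :=
  ∑ p ∈ mIdx d N, ε ^ (msize p.1 + msize p.2) / Mab p.1 p.2 * Qnorm d s (wD p.1 p.2 u)

/-- Real part of a point of ℂ^d. -/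
noncomputable def rePart {d : ℕ} (z : Cd d) : Rd d := WithLp.toLp 2 (fun j => (z j).re)
/-- Imaginary part of a point of ℂ^d. -/
noncomputable def imPart {d : ℕ} (z : Cd d) : Rd d := WithLp.toLp 2 (fun j => (z j).im)
/-- Canonical embedding ℝ^d → ℂ^d. -/
noncomputable def toCd {d : ℕ} (x : Rd d) : Cd d := WithLp.toLp 2 (fun j => (x j : ℂ))

/-- The open sector `{z = x + iy : |y| < ε (1 + |x|)}` in ℂ^d. -/
def sector (d : ℕ) (ε : ℝ) : Set (Cd d) :=
  {z | ‖imPart z‖ < ε * (1 + ‖rePart z‖)}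

/-- The Fourier transform `û(ξ) = ∫ e^{-i y·ξ} u(y) dy`. -/
noncomputable def FT {d : ℕ} (u : Rd d → ℂ) (ξ : Rd d) : ℂ :=
  ∫ y : Rd d, Complex.exp (-Complex.I * ((inner ℝ y ξ : ℝ) : ℂ)) * u y

/-- The pseudodifferential operator
`p(x,D)u(x) = (2π)^{-d} ∫ e^{i x·ξ} p(x,ξ) û(ξ) dξ`. -/
noncomputable def psiOp {d : ℕ} (p : Rd d → Rd d → ℂ) (u : Rd d → ℂ) : Rd d → ℂ :=
  fun x => (((2 * Real.pi) ^ d : ℝ) : ℂ)⁻¹ *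
    ∫ ξ : Rd d, Complex.exp (Complex.I * ((inner ℝ x ξ : ℝ) : ℂ)) * p x ξ * FT u ξ

/-- The mixed derivative `∂_ξ^α ∂_x^β p(x, ξ)` of a symbol. -/
noncomputable def symbDeriv {d : ℕ} (α β : Fin d → ℕ) (p : Rd d → Rd d → ℂ)
    (x ξ : Rd d) : ℂ :=
  mderiv β (fun x' => mderiv α (fun ξ' => p x' ξ') ξ) x

/-!
Multiplying by `x_j^{2k}` raises `|β|` by `2k`, and `M(α, β + 2k e_j) ≤ 2^{|α|+2k} |α|! k!` when
`|β| ≤ |α|`, so the hypothesis gives the moment bounds `|x|^{2k} |x^β ∂^α f(x)| ≤ A^k k! B` with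
`B` of size `C'^{|α|} |α|!`. Summing them against `1 / ((2A)^k k!)` bounds
`e^{|x|²/2A} |x^β ∂^α f(x)|` by the geometric series `2B`.
-/

open scoped Nat

theorem Nat.factorial_add_le_two_pow_mul (a b : ℕ) : (a + b)! ≤ 2 ^ (a + b) * (a ! * b !) :=
  calc (a + b)! = (a + b).choose b * a ! * b ! :=
        (Nat.add_choose_mul_factorial_mul_factorial a b).symm
    _ ≤ 2 ^ (a + b) * a ! * b ! := by gcongr; exact Nat.choose_le_two_pow _ _
    _ = 2 ^ (a + b) * (a ! * b !) := mul_assoc _ _ _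

theorem Real.le_two_mul_mul_exp_neg_of_pow_mul_le {A B g t : ℝ} (hA : 0 < A)
    (h : ∀ k : ℕ, t ^ k * g ≤ A ^ k * k ! * B) :
    g ≤ 2 * B * Real.exp (-(t / (2 * A))) := by
  have hexp : Real.exp (t / (2 * A)) * g = ∑' k : ℕ, (t / (2 * A)) ^ k / k ! * g := by
    rw [Real.exp_eq_exp_ℝ, NormedSpace.exp_eq_tsum_div, tsum_mul_right]
  have hterm (k : ℕ) : (t / (2 * A)) ^ k / k ! * g ≤ B * (1 / 2) ^ k := by
    have hpos : (0 : ℝ) < (2 * A) ^ k * k ! := by positivity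
    calc (t / (2 * A)) ^ k / k ! * g = t ^ k * g / ((2 * A) ^ k * k !) := by
          rw [div_pow]; ring
      _ ≤ A ^ k * k ! * B / ((2 * A) ^ k * k !) := div_le_div_of_nonneg_right (h k) hpos.le
      _ = B * (1 / 2) ^ k := by rw [mul_pow, div_pow, one_pow]; field_simp
  have hsum : Real.exp (t / (2 * A)) * g ≤ 2 * B := by
    rw [hexp]
    calc ∑' k : ℕ, (t / (2 * A)) ^ k / k ! * g ≤ ∑' k : ℕ, B * (1 / 2) ^ k :=
          ((Real.summable_pow_div_factorial _).mul_right g).tsum_le_tsum hterm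
            (summable_geometric_two.mul_left B)
      _ = 2 * B := by rw [tsum_mul_left, tsum_geometric_two, mul_comm]
  rw [Real.exp_neg, ← div_eq_mul_inv, le_div_iff₀ (Real.exp_pos _), mul_comm]
  exact hsum

section MultiIndex

variable {d : ℕ}

theorem msize_add (β γ : Fin d → ℕ) : msize (β + γ) = msize β + msize γ :=
  Finset.sum_add_distrib

theorem msize_single (j : Fin d) (n : ℕ) : msize (Pi.single j n) = n :=
  Fintype.sum_pi_single' j n

theorem mpow_add (x : Rd d) (β γ : Fin d → ℕ) : mpow x (β + γ) = mpow x β * mpow x γ := by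
  simp only [mpow, Pi.add_apply, pow_add, Finset.prod_mul_distrib]

theorem mpow_single (x : Rd d) (j : Fin d) (n : ℕ) : mpow x (Pi.single j n) = x j ^ n := by
  rw [mpow, Fintype.prod_eq_single j fun i hi => by rw [Pi.single_eq_of_ne hi, pow_zero],
    Pi.single_eq_same]

theorem norm_wD_add (α β γ : Fin d → ℕ) (f : Rd d → ℂ) (x : Rd d) :
    ‖wD α (β + γ) f x‖ = |mpow x γ| * ‖wD α β f x‖ := by
  simp only [wD, mpow_add, Complex.ofReal_mul, norm_mul, Complex.norm_real, Real.norm_eq_abs]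
  ring

theorem Mab_le_of_msize_le {α β : Fin d → ℕ} {k : ℕ} (h : msize β ≤ msize α + 2 * k) :
    Mab α β ≤ 2 ^ (msize α + 2 * k) * (msize α)! * k ! := by
  set a := msize α
  have hfact : a ! * (max a (msize β))! ≤ (2 ^ (a + 2 * k) * a ! * k !) ^ 2 :=
    calc a ! * (max a (msize β))! ≤ a ! * (a + 2 * k)! :=
          Nat.mul_le_mul_left _ (Nat.factorial_le (max_le (by omega) h))
      _ ≤ a ! * (2 ^ (a + 2 * k) * (a ! * (k + k)!)) := by
          rw [← two_mul]; gcongr; exact Nat.factorial_add_le_two_pow_mul a (2 * k)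
      _ ≤ a ! * (2 ^ (a + 2 * k) * (a ! * (2 ^ (k + k) * (k ! * k !)))) := by
          gcongr; exact Nat.factorial_add_le_two_pow_mul k k
      _ = 2 ^ (a + 4 * k) * (a ! * k !) ^ 2 := by ring
      _ ≤ 2 ^ (2 * (a + 2 * k)) * (a ! * k !) ^ 2 := by gcongr <;> omega
      _ = (2 ^ (a + 2 * k) * a ! * k !) ^ 2 := by ring
  rw [Mab, ← Real.sqrt_mul (by positivity), Real.sqrt_le_left (by positivity)]
  exact_mod_cast hfact

end MultiIndex

def MabBounded {d : ℕ} (C : ℝ) (f : Rd d → ℂ) : Prop :=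
  ∀ α β : Fin d → ℕ, ∀ x : Rd d, ‖wD α β f x‖ ≤ C ^ (msize α + msize β + 1) * Mab α β

section MomentBounds

variable {d : ℕ} {f : Rd d → ℂ} {C : ℝ} {α β : Fin d → ℕ}

theorem MabBounded.norm_wD_le (hf : MabBounded C f) (hC : 1 ≤ C) {k : ℕ}
    (h : msize β ≤ msize α + 2 * k) (x : Rd d) :
    ‖wD α β f x‖ ≤ (4 * C ^ 2) ^ k * k ! * ((2 * C ^ 2) ^ msize α * C * (msize α)!) :=
  calc ‖wD α β f x‖ ≤ C ^ (msize α + msize β + 1) * Mab α β := hf α β x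
    _ ≤ C ^ (2 * msize α + 2 * k + 1) * (2 ^ (msize α + 2 * k) * (msize α)! * k !) := by
        refine mul_le_mul (pow_le_pow_right₀ hC (by omega)) (Mab_le_of_msize_le h) ?_
          (by positivity)
        rw [Mab]; positivity
    _ = (4 * C ^ 2) ^ k * k ! * ((2 * C ^ 2) ^ msize α * C * (msize α)!) := by
        rw [mul_pow, show (4 : ℝ) ^ k = 2 ^ (2 * k) by rw [pow_mul]; norm_num]; ring

theorem MabBounded.sq_coord_pow_mul_norm_wD_le (hf : MabBounded C f) (hC : 1 ≤ C)
    (hβ : msize β ≤ msize α) (x : Rd d) (j : Fin d) (k : ℕ) :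
    (x j ^ 2) ^ k * ‖wD α β f x‖ ≤
      (4 * C ^ 2) ^ k * k ! * ((2 * C ^ 2) ^ msize α * C * (msize α)!) := by
  have h := hf.norm_wD_le hC (α := α) (β := β + Pi.single j (2 * k)) (k := k)
    (by rw [msize_add, msize_single]; omega) x
  rwa [norm_wD_add, mpow_single, pow_mul, abs_of_nonneg (by positivity)] at h

theorem MabBounded.sq_norm_pow_mul_norm_wD_le (hf : MabBounded C f) (hC : 1 ≤ C)
    (hβ : msize β ≤ msize α) (x : Rd d) (k : ℕ) :
    (‖x‖ ^ 2) ^ k * ‖wD α β f x‖ ≤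
      (4 * (d + 1) * C ^ 2) ^ k * k ! * ((2 * C ^ 2) ^ msize α * C * (msize α)!) := by
  rcases isEmpty_or_nonempty (Fin d) with hd | hd
  · rcases k with _ | k
    · simpa using hf.norm_wD_le hC (k := 0) hβ x
    · rw [Subsingleton.elim x 0, norm_zero, zero_pow two_ne_zero, zero_pow k.succ_ne_zero, zero_mul]
      positivity
  obtain ⟨j, -, hj⟩ :=
    Finset.exists_max_image Finset.univ (fun i => x i ^ 2) Finset.univ_nonempty
  have hxj : ‖x‖ ^ 2 ≤ (d + 1) * x j ^ 2 :=
    calc ‖x‖ ^ 2 = ∑ i, x i ^ 2 := EuclideanSpace.real_norm_sq_eq x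
      _ ≤ d * x j ^ 2 := by
          simpa using Finset.sum_le_card_nsmul Finset.univ _ _ fun i _ => hj i (Finset.mem_univ i)
      _ ≤ (d + 1) * x j ^ 2 := by gcongr; linarith
  calc (‖x‖ ^ 2) ^ k * ‖wD α β f x‖ ≤ ((d + 1) * x j ^ 2) ^ k * ‖wD α β f x‖ := by gcongr
    _ = (d + 1) ^ k * ((x j ^ 2) ^ k * ‖wD α β f x‖) := by rw [mul_pow, mul_assoc]
    _ ≤ (d + 1) ^ k * ((4 * C ^ 2) ^ k * k ! * ((2 * C ^ 2) ^ msize α * C * (msize α)!)) :=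
        mul_le_mul_of_nonneg_left (hf.sq_coord_pow_mul_norm_wD_le hC hβ x j k) (by positivity)
    _ = (4 * (d + 1) * C ^ 2) ^ k * k ! * ((2 * C ^ 2) ^ msize α * C * (msize α)!) := by
        simp only [mul_pow]; ring

end MomentBounds

theorem statement1_general (d : ℕ) (f : Rd d → ℂ)
    (C : ℝ) (hC : 1 ≤ C)
    (hest : ∀ α β : Fin d → ℕ, ∀ x : Rd d,
      ‖wD α β f x‖ ≤ C ^ (msize α + msize β + 1) * Mab α β) :
    ∃ C' > (0:ℝ), ∃ c > (0:ℝ), ∀ α β : Fin d → ℕ, msize β ≤ msize α → ∀ x : Rd d,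
      ‖wD α β f x‖ ≤ C' ^ (msize α + 1) * (Nat.factorial (msize α)) *
        Real.exp (-c * ‖x‖ ^ 2) := by
  refine ⟨4 * C ^ 2, by positivity, 1 / (8 * (d + 1) * C ^ 2), by positivity, fun α β hβ x => ?_⟩
  set a := msize α
  have hdecay := Real.le_two_mul_mul_exp_neg_of_pow_mul_le (by positivity)
    (MabBounded.sq_norm_pow_mul_norm_wD_le hest hC hβ x)
  have hexp : -(‖x‖ ^ 2 / (2 * (4 * (d + 1) * C ^ 2))) =
      -(1 / (8 * (d + 1) * C ^ 2)) * ‖x‖ ^ 2 := by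
    field_simp; ring
  have hcoeff : 2 * ((2 * C ^ 2) ^ a * C * a !) ≤ (4 * C ^ 2) ^ (a + 1) * a ! :=
    calc 2 * ((2 * C ^ 2) ^ a * C * a !) = (2 * C ^ 2) ^ a * (2 * C) * a ! := by ring
      _ ≤ (4 * C ^ 2) ^ a * (4 * C ^ 2) * a ! := by gcongr <;> nlinarith
      _ = (4 * C ^ 2) ^ (a + 1) * a ! := by ring
  rw [hexp] at hdecay
  exact hdecay.trans (by gcongr)

/-- First step of the extension theorem: the estimates defining `H_sect` imply
`|x^β ∂^α f(x)| ≤ C'^{|α|+1} |α|! e^{-c|x|²}` whenever `|β| ≤ |α|`. -/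
theorem statement1 (d : ℕ) (f : Rd d → ℂ) (hf : ContDiff ℝ (⊤ : ℕ∞) f)
    (C : ℝ) (hC : 1 ≤ C)
    (hest : ∀ α β : Fin d → ℕ, ∀ x : Rd d,
      ‖wD α β f x‖ ≤ C ^ (msize α + msize β + 1) * Mab α β) :
    ∃ C' > (0:ℝ), ∃ c > (0:ℝ), ∀ α β : Fin d → ℕ, msize β ≤ msize α → ∀ x : Rd d,
      ‖wD α β f x‖ ≤ C' ^ (msize α + 1) * (Nat.factorial (msize α)) *
        Real.exp (-c * ‖x‖ ^ 2) :=
  statement1_general d f C hC hest
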